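/- Let G be a finite abelian group, identify characters with group elements via a fixed isomorphism so that χ_j(i) are the character values, and let F = (1/√|G|) ∑_{i,j} χ_j(i) |j⟩⟨i| be the Fourier transform on ℂ^G. Then for any coset c₀ + H of a subgroup H ≤ G, F maps the coset state (1/√|H|) ∑_{h∈H} |c₀+h⟩ to (1/√|H^⊥|) ∑_{j∈H^⊥} χ_j(c₀) |j⟩. -/

import Mathlib

/-!
Translating by `c₀` turns the transformed coset state at `j` into
`χ_j(c₀) ∑_{h ∈ H} χ_j(h) / √(|G| |H|)`, and the inner sum is `|H|` if `χ_j` is trivial on `H`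
and `0` otherwise. The normalisation then rests on `|H^⊥| |H| = |G|`, obtained by evaluating
`∑_{j ∈ G} ∑_{h ∈ H} χ_j(h)` both ways: summing over `h` first gives `|H^⊥| |H|`, while summing
over `j` first kills every `h ≠ 0`, because `j ↦ χ_j` is a bijection onto the dual group.
-/

open scoped Classical

open Finset

section CharacterSums

variable {G : Type*} [AddCommGroup G] [Fintype G]

lemma AddChar.sum_addSubgroup_eq_ite {R : Type*} [CommRing R] [IsDomain R] (ψ : AddChar G R)
    (H : AddSubgroup G) :
    ∑ h : H, ψ h = if ∀ h ∈ H, ψ h = 1 then (Nat.card H : R) else 0 := by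
  have hres : ψ.compAddMonoidHom H.subtype = 0 ↔ ∀ h ∈ H, ψ h = 1 := by
    simp [AddChar.eq_zero_iff]
  simpa only [hres, Nat.card_eq_fintype_card, AddChar.compAddMonoidHom_apply,
    AddSubgroup.coe_subtype] using (ψ.compAddMonoidHom H.subtype).sum_eq_ite

lemma AddChar.sum_coset_eq_mul {R : Type*} [CommSemiring R] (ψ : AddChar G R)
    (H : AddSubgroup G) (c : G) :
    ∑ i, (if i - c ∈ H then ψ i else 0) = ψ c * ∑ h : H, ψ h := by
  calc ∑ i, (if i - c ∈ H then ψ i else 0)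
      = ∑ x, (if x ∈ H then ψ c * ψ x else 0) := by
        refine (Fintype.sum_equiv (Equiv.addLeft c) _ _ fun x => ?_).symm
        simp [AddChar.map_add_eq_mul]
    _ = ψ c * ∑ h : H, ψ h := by
        rw [← sum_filter, ← mul_sum, sum_subtype (p := (· ∈ H)) _ (by simp)]

end CharacterSums

section Pairing

variable {G : Type*} [AddCommGroup G] [Fintype G]

def pairingHom (χ : G → AddChar G ℂ) (hmul : ∀ j₁ j₂ i : G, χ (j₁ + j₂) i = χ j₁ i * χ j₂ i) :
    G →+ Additive (AddChar G ℂ) :=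
  AddMonoidHom.mk' (fun j => Additive.ofMul (χ j)) fun a b =>
    congrArg Additive.ofMul (DFunLike.ext _ _ (hmul a b))

lemma bijective_of_perfect_pairing (χ : G → AddChar G ℂ)
    (hmul : ∀ j₁ j₂ i : G, χ (j₁ + j₂) i = χ j₁ i * χ j₂ i)
    (hperf : ∀ j : G, j ≠ 0 → ∃ i : G, χ j i ≠ 1) : Function.Bijective χ := by
  have hinj : Function.Injective (pairingHom χ hmul) := by
    refine (injective_iff_map_eq_zero _).2 fun j hj => ?_
    by_contra hj0
    obtain ⟨i, hi⟩ := hperf j hj0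
    exact hi (DFunLike.congr_fun (congrArg Additive.toMul hj) i)
  exact (Fintype.bijective_iff_injective_and_card χ).2
    ⟨fun a b h => hinj (congrArg Additive.ofMul h), AddChar.card_eq.symm⟩

lemma sum_pairing_apply_eq_ite (χ : G → AddChar G ℂ)
    (hmul : ∀ j₁ j₂ i : G, χ (j₁ + j₂) i = χ j₁ i * χ j₂ i)
    (hperf : ∀ j : G, j ≠ 0 → ∃ i : G, χ j i ≠ 1) (i : G) :
    ∑ j, χ j i = if i = 0 then (Fintype.card G : ℂ) else 0 := by
  rw [← AddChar.sum_apply_eq_ite,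
    ← (Equiv.ofBijective χ (bijective_of_perfect_pairing χ hmul hperf)).sum_comp]
  rfl

lemma card_perp_mul_card (χ : G → AddChar G ℂ)
    (hmul : ∀ j₁ j₂ i : G, χ (j₁ + j₂) i = χ j₁ i * χ j₂ i)
    (hperf : ∀ j : G, j ≠ 0 → ∃ i : G, χ j i ≠ 1) (H : AddSubgroup G) :
    Nat.card {j : G | ∀ h ∈ H, χ j h = 1} * Nat.card H = Nat.card G := by
  have hrows : ∑ j, ∑ h : H, χ j h = Nat.card {j : G | ∀ h ∈ H, χ j h = 1} * Nat.card H := by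
    simp only [AddChar.sum_addSubgroup_eq_ite, sum_ite, sum_const_zero, add_zero, sum_const,
      nsmul_eq_mul]
    simp
  have hcols : ∑ h : H, ∑ j, χ j h = Nat.card G := by
    simp only [sum_pairing_apply_eq_ite χ hmul hperf]
    simp
  exact_mod_cast hrows.symm.trans (sum_comm.trans hcols)

end Pairing

/-- The Fourier transform `F = (1/√|G|) ∑ χ_j(i) |j⟩⟨i|` maps the coset state
`(1/√|H|) ∑_{h∈H} |c₀+h⟩` to `(1/√|H^⊥|) ∑_{j∈H^⊥} χ_j(c₀) |j⟩`. Here the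
characters of the finite abelian group `G` are identified with group elements
via a perfect pairing `χ`. -/
theorem fourier_transform_coset_state
    {G : Type*} [AddCommGroup G] [Fintype G]
    (χ : G → AddChar G ℂ)
    (hmul : ∀ j₁ j₂ i : G, χ (j₁ + j₂) i = χ j₁ i * χ j₂ i)
    (hperf : ∀ j : G, j ≠ 0 → ∃ i : G, χ j i ≠ 1)
    (H : AddSubgroup G) (c₀ : G) :
    let ψ : G → ℂ := fun x =>
      if x - c₀ ∈ H then (1 / Real.sqrt (Nat.card H) : ℂ) else 0
    let Hperp : Set G := {j : G | ∀ h ∈ H, χ j h = 1}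
    ∀ j : G,
      ∑ i : G, (χ j i / Real.sqrt (Nat.card G)) * ψ i =
        if j ∈ Hperp then χ j c₀ / (Real.sqrt (Nat.card Hperp) : ℂ) else 0 := by
  intro ψ Hperp j
  have hsum : ∑ i, χ j i / Real.sqrt (Nat.card G) * ψ i =
      (χ j c₀ * ∑ h : H, χ j h) / (Real.sqrt (Nat.card G) * Real.sqrt (Nat.card H) : ℂ) := by
    rw [← AddChar.sum_coset_eq_mul, sum_div]
    refine sum_congr rfl fun i _ => ?_
    simp only [ψ]
    split_ifs
    · field_simp
    · simp
  rw [hsum, AddChar.sum_addSubgroup_eq_ite]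
  by_cases hj : j ∈ Hperp
  · rw [if_pos hj, if_pos (show ∀ h ∈ H, χ j h = 1 from hj)]
    have hsq : (Nat.card H : ℂ) = Real.sqrt (Nat.card H) * Real.sqrt (Nat.card H) := by
      exact_mod_cast (Real.mul_self_sqrt (Nat.cast_nonneg _)).symm
    rw [← card_perp_mul_card χ hmul hperf H, Nat.cast_mul, Real.sqrt_mul (Nat.cast_nonneg _),
      Complex.ofReal_mul, hsq]
    field_simp
    rfl
  · rw [if_neg hj, if_neg (show ¬∀ h ∈ H, χ j h = 1 from hj), mul_zero, zero_div]
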